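/- arXiv:1708.05275 — 2 statements merged into one kernel-verified Lean document; each statement's English description precedes it below -/
import Mathlib

section
/- Let F : C → B and H : B → C be functors with F left adjoint to H, with unit η : Id → H∘F and counit ε : F∘H → Id. Then the following are equivalent: (1) F is separable; (2) there exists a natural transformation ξ : H∘F → Id with ξ ∘ η = Id; (3) there exist natural transformations φ : H∘F → Id and ψ : Id → H∘F with φ ∘ ψ = Id. -/
open CategoryTheory

universe v₁ v₂ u₁ u₂

variable {C : Type u₁} [Category.{v₁} C] {B : Type u₂} [Category.{v₂} B]

/-- A functor `F : C ⥤ B` is *separable* if the natural transformation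
`Hom_C(-,-) ⟶ Hom_B(F-,F-)` induced by `F` admits a natural retraction. -/
def CategoryTheory.Functor.Separable (F : C ⥤ B) : Prop :=
  ∃ Φ : ∀ X Y : C, (F.obj X ⟶ F.obj Y) → (X ⟶ Y),
    (∀ (X Y : C) (f : X ⟶ Y), Φ X Y (F.map f) = f) ∧
    (∀ (X' X Y Y' : C) (u : X' ⟶ X) (v : Y ⟶ Y') (h : F.obj X ⟶ F.obj Y),
      Φ X' Y' (F.map u ≫ h ≫ F.map v) = u ≫ Φ X Y h ≫ v)

private lemma sep_to_xi (F : C ⥤ B) (H : B ⥤ C) (adj : F ⊣ H) (hF : F.Separable) :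
    ∃ ξ : F ⋙ H ⟶ 𝟭 C, adj.unit ≫ ξ = 𝟙 (𝟭 C) := by
  obtain ⟨Φ, hretr, hnat⟩ := hF
  refine ⟨⟨fun X => Φ (H.obj (F.obj X)) X (adj.counit.app (F.obj X)), ?_⟩, ?_⟩
  · intro X Y f
    have h2 := hnat (H.obj (F.obj X)) (H.obj (F.obj Y)) Y Y (H.map (F.map f)) (𝟙 Y)
      (adj.counit.app (F.obj Y))
    have h1 := hnat (H.obj (F.obj X)) (H.obj (F.obj X)) X Y (𝟙 _) f
      (adj.counit.app (F.obj X))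
    have harg : F.map (H.map (F.map f)) ≫ adj.counit.app (F.obj Y) ≫ F.map (𝟙 Y) =
        F.map (𝟙 (H.obj (F.obj X))) ≫ adj.counit.app (F.obj X) ≫ F.map f := by
      simp [adj.counit.naturality (F.map f)]
    calc H.map (F.map f) ≫ Φ (H.obj (F.obj Y)) Y (adj.counit.app (F.obj Y))
        = H.map (F.map f) ≫ Φ (H.obj (F.obj Y)) Y (adj.counit.app (F.obj Y)) ≫ 𝟙 Y := by
          rw [Category.comp_id]
      _ = Φ (H.obj (F.obj X)) Y
            (F.map (H.map (F.map f)) ≫ adj.counit.app (F.obj Y) ≫ F.map (𝟙 Y)) := h2.symm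
      _ = Φ (H.obj (F.obj X)) Y
            (F.map (𝟙 (H.obj (F.obj X))) ≫ adj.counit.app (F.obj X) ≫ F.map f) := by rw [harg]
      _ = 𝟙 _ ≫ Φ (H.obj (F.obj X)) X (adj.counit.app (F.obj X)) ≫ f := h1
      _ = Φ (H.obj (F.obj X)) X (adj.counit.app (F.obj X)) ≫ f := by rw [Category.id_comp]
  · ext X
    simp only [NatTrans.comp_app, NatTrans.id_app, Functor.id_obj]
    have h := hnat X (H.obj (F.obj X)) X X (adj.unit.app X) (𝟙 X) (adj.counit.app (F.obj X))
    have harg : F.map (adj.unit.app X) ≫ adj.counit.app (F.obj X) ≫ F.map (𝟙 X) =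
        F.map (𝟙 X) := by
      simp [adj.left_triangle_components]
    rw [← Category.comp_id (Φ (H.obj (F.obj X)) X (adj.counit.app (F.obj X))), ← h,
      harg, hretr]

private lemma phi_psi_to_sep (F : C ⥤ B) (H : B ⥤ C)
    (φ : F ⋙ H ⟶ 𝟭 C) (ψ : 𝟭 C ⟶ F ⋙ H) (hφψ : ψ ≫ φ = 𝟙 (𝟭 C)) : F.Separable := by
  refine ⟨fun X Y h => ψ.app X ≫ H.map h ≫ φ.app Y, ?_, ?_⟩
  · intro X Y f
    show ψ.app X ≫ H.map (F.map f) ≫ φ.app Y = f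
    have hn : ψ.app X ≫ H.map (F.map f) = f ≫ ψ.app Y := by
      have := ψ.naturality f
      simpa using this.symm
    have hid : ψ.app Y ≫ φ.app Y = 𝟙 Y := by
      have := congrArg (fun t => t.app Y) hφψ
      simpa using this
    rw [← Category.assoc, hn, Category.assoc, hid, Category.comp_id]
  · intro X' X Y Y' u v h
    show ψ.app X' ≫ H.map (F.map u ≫ h ≫ F.map v) ≫ φ.app Y' =
      u ≫ (ψ.app X ≫ H.map h ≫ φ.app Y) ≫ v
    have hψ : ψ.app X' ≫ H.map (F.map u) = u ≫ ψ.app X := by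
      have := ψ.naturality u
      simpa using this.symm
    have hφv : H.map (F.map v) ≫ φ.app Y' = φ.app Y ≫ v := by
      have := φ.naturality v
      simpa using this
    simp only [Functor.map_comp, Category.assoc, hφv]
    rw [← Category.assoc, hψ]
    simp only [Category.assoc]

/-- Rafael's characterization of separability of a left adjoint: given an adjoint pair
`F : C ⇄ B : H` with unit `η : Id ⟶ H∘F` and counit `ε : F∘H ⟶ Id`, the following are
equivalent: (1) `F` is separable; (2) there is `ξ : H∘F ⟶ Id` with `ξ ∘ η = Id`;
(3) there are `φ : H∘F ⟶ Id` and `ψ : Id ⟶ H∘F` with `φ ∘ ψ = Id`. -/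
theorem separable_left_adjoint_tfae (F : C ⥤ B) (H : B ⥤ C) (adj : F ⊣ H) :
    (F.Separable ↔ ∃ ξ : F ⋙ H ⟶ 𝟭 C, adj.unit ≫ ξ = 𝟙 (𝟭 C)) ∧
    (F.Separable ↔ ∃ (φ : F ⋙ H ⟶ 𝟭 C) (ψ : 𝟭 C ⟶ F ⋙ H), ψ ≫ φ = 𝟙 (𝟭 C)) := by
  constructor
  · constructor
    · exact sep_to_xi F H adj
    · rintro ⟨ξ, hξ⟩
      exact phi_psi_to_sep F H ξ adj.unit hξ
  · constructor
    · intro hF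
      obtain ⟨ξ, hξ⟩ := sep_to_xi F H adj hF
      exact ⟨ξ, adj.unit, hξ⟩
    · rintro ⟨φ, ψ, h⟩
      exact phi_psi_to_sep F H φ ψ h
end

section
/- Let B be an idempotent-complete additive category and Y₁, Y₂ objects with Hom(Y₁,Y₂) = 0 = Hom(Y₂,Y₁). If Y is a direct summand of Y₁ ⊕ Y₂, then Y decomposes as Y = Y₃ ⊕ Y₄ where Y₃ is a direct summand of Y₁ and Y₄ is a direct summand of Y₂. -/
/-!
Write `a, b` for the components of `u` and `a', b'` for those of `v`, so that
`a ≫ a' + b ≫ b' = 𝟙 Y`. Since `a' ≫ b : Y₁ ⟶ Y₂` and `b' ≫ a : Y₂ ⟶ Y₁` vanish, `a ≫ a'` and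
`b ≫ b'` are complementary idempotents of `Y`; splitting them decomposes `Y` as a biproduct, and
each piece is a retract of `Y₁` resp. `Y₂` because its idempotent factors through that object.
-/

open CategoryTheory Limits

universe v u

namespace CategoryTheory

variable {C : Type u} [Category.{v} C]

theorem exists_retract_of_idem [IsIdempotentComplete C] {Y : C} (p : Y ⟶ Y) (hp : p ≫ p = p) :
    ∃ (X : C) (h : Retract X Y), h.r ≫ h.i = p := by
  obtain ⟨X, i, r, hir, hri⟩ := IsIdempotentComplete.idempotents_split Y p hp
  exact ⟨X, ⟨i, r, hir⟩, hri⟩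

namespace Retract

def ofFactorization {X Y Z : C} (h : Retract X Y) (a : Y ⟶ Z) (b : Z ⟶ Y)
    (fac : h.r ≫ h.i = a ≫ b) : Retract X Z where
  i := h.i ≫ a
  r := b ≫ h.r
  retract := by
    calc (h.i ≫ a) ≫ b ≫ h.r = h.i ≫ (h.r ≫ h.i) ≫ h.r := by simp only [fac, Category.assoc]
      _ = 𝟙 X := by simp

variable [Preadditive C] {X₁ X₂ Y : C} (h₁ : Retract X₁ Y) (h₂ : Retract X₂ Y)

theorem i_comp_r_eq_zero_of_total (total : h₁.r ≫ h₁.i + h₂.r ≫ h₂.i = 𝟙 Y) :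
    h₁.i ≫ h₂.r = 0 := by
  -- expanding the middle factor writes `h₁.i ≫ h₂.r` as twice itself
  have h : h₁.i ≫ (h₁.r ≫ h₁.i + h₂.r ≫ h₂.i) ≫ h₂.r = h₁.i ≫ h₂.r := by
    rw [total, Category.id_comp]
  simp only [Preadditive.add_comp, Preadditive.comp_add, Category.assoc, retract_assoc,
    retract, Category.comp_id] at h
  exact add_eq_right.mp h

def binaryBicone (total : h₁.r ≫ h₁.i + h₂.r ≫ h₂.i = 𝟙 Y) : BinaryBicone X₁ X₂ where
  pt := Y
  fst := h₁.r
  snd := h₂.r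
  inl := h₁.i
  inr := h₂.i
  inl_snd := h₁.i_comp_r_eq_zero_of_total h₂ total
  inr_fst := h₂.i_comp_r_eq_zero_of_total h₁ (by rw [add_comm, total])

noncomputable def isoBiprod [HasBinaryBiproduct X₁ X₂]
    (total : h₁.r ≫ h₁.i + h₂.r ≫ h₂.i = 𝟙 Y) : Y ≅ X₁ ⊞ X₂ :=
  biprod.uniqueUpToIso X₁ X₂ (isBinaryBilimitOfTotal (h₁.binaryBicone h₂ total) total)

end Retract

theorem Preadditive.idem_of_add_comp_eq_id [Preadditive C] {Y Z W : C} (a : Y ⟶ Z) (a' : Z ⟶ Y)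
    (b : Y ⟶ W) (b' : W ⟶ Y) (total : a ≫ a' + b ≫ b' = 𝟙 Y) (h : a' ≫ b = 0) :
    (a ≫ a') ≫ (a ≫ a') = a ≫ a' := by
  have h' : a ≫ a' ≫ (a ≫ a' + b ≫ b') = a ≫ a' := by rw [total, Category.comp_id]
  simpa only [Preadditive.comp_add, reassoc_of% h, zero_comp, comp_zero, add_zero,
    Category.assoc] using h'

end CategoryTheory

/-- In an idempotent-complete additive category `B`, if `Hom(Y₁,Y₂) = 0 = Hom(Y₂,Y₁)` and
`Y` is a direct summand of `Y₁ ⊕ Y₂`, then `Y ≅ Y₃ ⊕ Y₄` where `Y₃` is a direct summand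
of `Y₁` and `Y₄` is a direct summand of `Y₂`. -/
theorem summand_of_orthogonal_biproduct
    {B : Type u} [Category.{v} B] [Preadditive B] [HasBinaryBiproducts B]
    [IsIdempotentComplete B]
    (Y₁ Y₂ : B) (h₁₂ : ∀ f : Y₁ ⟶ Y₂, f = 0) (h₂₁ : ∀ f : Y₂ ⟶ Y₁, f = 0)
    (Y : B) (u : Y ⟶ Y₁ ⊞ Y₂) (v : Y₁ ⊞ Y₂ ⟶ Y) (huv : u ≫ v = 𝟙 Y) :
    ∃ (Y₃ Y₄ : B) (_ : Y ≅ Y₃ ⊞ Y₄)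
      (u₃ : Y₃ ⟶ Y₁) (v₃ : Y₁ ⟶ Y₃) (u₄ : Y₄ ⟶ Y₂) (v₄ : Y₂ ⟶ Y₄),
      u₃ ≫ v₃ = 𝟙 Y₃ ∧ u₄ ≫ v₄ = 𝟙 Y₄ := by
  have total :
      (u ≫ biprod.fst) ≫ (biprod.inl ≫ v) + (u ≫ biprod.snd) ≫ (biprod.inr ≫ v) = 𝟙 Y :=
    calc _ = u ≫ (biprod.fst ≫ biprod.inl + biprod.snd ≫ biprod.inr) ≫ v := by
          simp only [Preadditive.add_comp, Preadditive.comp_add, Category.assoc]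
      _ = 𝟙 Y := by rw [biprod.total, Category.id_comp, huv]
  obtain ⟨Y₃, h₃, hp₃⟩ := exists_retract_of_idem _
    (Preadditive.idem_of_add_comp_eq_id _ _ _ _ total (h₁₂ _))
  obtain ⟨Y₄, h₄, hp₄⟩ := exists_retract_of_idem _
    (Preadditive.idem_of_add_comp_eq_id _ _ _ _ (by rw [add_comm, total]) (h₂₁ _))
  let s₃ := h₃.ofFactorization _ _ hp₃
  let s₄ := h₄.ofFactorization _ _ hp₄
  exact ⟨Y₃, Y₄, h₃.isoBiprod h₄ (by rw [hp₃, hp₄, total]), s₃.i, s₃.r, s₄.i, s₄.r,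
    s₃.retract, s₄.retract⟩
end
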